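/- For all L, M ∈ 𝐋 and P = diag(P₁,…,P_T) ∈ 𝐎, the following are equivalent: (i) P ∈ 𝐎*(L,M); (ii) for every t = 1,…,T, both (MᵀL)_{t,t}Pₜᵀ and Pₜᵀ(MᵀL)_{t,t} are positive semidefinite; (iii) for every t = 1,…,T, tr((MᵀL)_{t,t}Pₜᵀ) = tr( ((MᵀL)_{t,t}ᵀ(MᵀL)_{t,t})^{1/2} ), i.e., equals the sum of the singular values of (MᵀL)_{t,t}. In particular, the identity matrix belongs to 𝐎*(L,M) if and only if (MᵀL)_{t,t} is positive semidefinite for all t = 1,…,T. -/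

import Mathlib

open Matrix Filter Topology

/-- Square matrices of size `dT × dT`, indexed by blocks: index `(t, i)` is
row/column `i` within block `t`. -/
abbrev Mat (d T : ℕ) := Matrix (Fin T × Fin d) (Fin T × Fin d) ℝ

/-- The `t`-th diagonal `d × d` block of a `dT × dT` matrix. -/
def blk {d T : ℕ} (A : Mat d T) (t : Fin T) : Matrix (Fin d) (Fin d) ℝ :=
  fun i j => A (t, i) (t, j)

/-- The `t`-th block column of a `dT × dT` matrix, a `dT × d` matrix. -/
def colBlk {d T : ℕ} (A : Mat d T) (t : Fin T) : Matrix (Fin T × Fin d) (Fin d) ℝ :=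
  fun p j => A p (t, j)

/-- Membership in `𝐋`: block lower triangular matrices. -/
def memL {d T : ℕ} (A : Mat d T) : Prop :=
  ∀ (t s : Fin T) (i j : Fin d), t < s → A (t, i) (s, j) = 0

/-- Membership in `𝐎`: block diagonal matrices with orthogonal `d × d` diagonal blocks
(equivalently: block diagonal and orthogonal). -/
def memO {d T : ℕ} (O : Mat d T) : Prop :=
  (∀ (t s : Fin T) (i j : Fin d), t ≠ s → O (t, i) (s, j) = 0) ∧ Oᵀ * O = 1

/-- The Frobenius norm of a real matrix. -/
noncomputable def frobNorm {m n : Type*} [Fintype m] [Fintype n] (A : Matrix m n ℝ) : ℝ :=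
  Real.sqrt (∑ i, ∑ j, (A i j) ^ 2)

/-- The Frobenius inner product of two real matrices. -/
noncomputable def frobInner {m n : Type*} [Fintype m] [Fintype n] (A B : Matrix m n ℝ) : ℝ :=
  ∑ i, ∑ j, A i j * B i j

/-- The adapted Bures–Wasserstein distance `d_ABW(L, M) = inf_{O ∈ 𝐎} ‖L - M O‖_F`. -/
noncomputable def dABW {d T : ℕ} (L M : Mat d T) : ℝ :=
  sInf {r : ℝ | ∃ O : Mat d T, memO O ∧ r = frobNorm (L - M * O)}

/-- The set `𝐎*(L, M)` of optimizers of `inf_{O ∈ 𝐎} ‖L - M O‖_F`. -/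
noncomputable def OStar {d T : ℕ} (L M : Mat d T) : Set (Mat d T) :=
  {O | memO O ∧ frobNorm (L - M * O) = dABW L M}

/-- The set `𝐕(L) = {M P - L : M ∈ 𝐋, P ∈ 𝐎*(L, M)}`. -/
noncomputable def VSet {d T : ℕ} (L : Mat d T) : Set (Mat d T) :=
  {V | ∃ M P : Mat d T, memL M ∧ P ∈ OStar L M ∧ V = M * P - L}

/-- The set `𝒱(L) = {V ∈ 𝐋 : (Vᵀ L)_{t,t} is symmetric for all t}`. -/
def calV {d T : ℕ} (L : Mat d T) : Set (Mat d T) :=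
  {V | memL V ∧ ∀ t : Fin T, (blk (Vᵀ * L) t).IsSymm}

/-- The set `𝐋^reg = {L ∈ 𝐋 : (Lᵀ L)_{t,t} is positive definite for all t}`. -/
def LReg {d T : ℕ} : Set (Mat d T) :=
  {L | memL L ∧ ∀ t : Fin T, (blk (Lᵀ * L) t).PosDef}

/-- The sum of the singular values of a real square matrix `A`,
i.e. the trace of the positive semidefinite square root of `Aᵀ A`. -/
noncomputable def svSum {n : ℕ} (A : Matrix (Fin n) (Fin n) ℝ) : ℝ :=
  ((Matrix.posSemidef_conjTranspose_mul_self A).1.eigenvectorUnitary.1 *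
    diagonal ((RCLike.ofReal : ℝ → ℝ) ∘ Real.sqrt ∘
      (Matrix.posSemidef_conjTranspose_mul_self A).1.eigenvalues) *
    (star (Matrix.posSemidef_conjTranspose_mul_self A).1.eigenvectorUnitary :
      Matrix (Fin n) (Fin n) ℝ)).trace

/-- The operator norm of a real matrix: the supremum of the euclidean norm `‖A x‖₂`
over the euclidean unit ball. -/
noncomputable def opNorm {m n : Type*} [Fintype m] [Fintype n] (A : Matrix m n ℝ) : ℝ :=
  sSup {r : ℝ | ∃ x : n → ℝ, (∑ j, (x j) ^ 2) ≤ 1 ∧ r = Real.sqrt (∑ i, (A.mulVec x i) ^ 2)}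

/-!
For block-diagonal orthogonal `O`, `‖L - M O‖²_F = ‖L‖²_F + ‖M‖²_F - 2 ∑ₜ tr(Cₜ Oₜᵀ)` with
`C = MᵀL`, so the problem decouples into maximizing each `tr(Cₜ Qᵀ)` over orthogonal `Q`.
Conjugating `B = QᵀCₜ` by an orthonormal eigenbasis `V` of `CₜᵀCₜ` gives a matrix whose columns
are orthogonal, with norms the singular values `σᵢ` of `Cₜ`. A diagonal entry is at most the norm
of its column, so `tr(Cₜ Qᵀ) ≤ ∑ σᵢ`, with equality iff `VᵀBV = diag σ`, i.e. iff `B` is the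
positive square root of `CₜᵀCₜ`, i.e. iff `B` is positive semidefinite. The bound is attained:
completing the normalized nonzero columns of `CₜV` to an orthonormal basis yields a polar
decomposition of `Cₜ`.
-/

section
variable {n : Type*} [Fintype n]

lemma le_of_sum_sq_eq_sq {x : n → ℝ} {c : ℝ} (hc : 0 ≤ c) (h : ∑ k, x k ^ 2 = c ^ 2) (i : n) :
    x i ≤ c := by
  have hi : x i ^ 2 ≤ c ^ 2 :=
    h ▸ Finset.single_le_sum (fun k _ => sq_nonneg (x k)) (Finset.mem_univ i)
  exact (abs_le_of_sq_le_sq' hi hc).2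

variable [DecidableEq n]

lemma eq_zero_of_sum_sq_eq_sq {x : n → ℝ} {i : n} (h : ∑ k, x k ^ 2 = x i ^ 2) {k : n}
    (hk : k ≠ i) : x k = 0 := by
  rw [← Finset.add_sum_erase _ _ (Finset.mem_univ i), add_eq_left,
    Finset.sum_eq_zero_iff_of_nonneg (fun k _ => sq_nonneg (x k))] at h
  exact pow_eq_zero_iff two_ne_zero |>.mp (h k (Finset.mem_erase.mpr ⟨hk, Finset.mem_univ k⟩))

namespace Matrix

lemma sum_sq_col_eq {C : Matrix n n ℝ} {σ : n → ℝ} (h : Cᵀ * C = diagonal (σ ^ 2)) (i : n) :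
    ∑ k, C k i ^ 2 = σ i ^ 2 := by
  simpa [mul_apply, sq] using congrFun (congrFun h i) i

lemma trace_le_sum_of_transpose_mul_self_eq_diagonal {C : Matrix n n ℝ} {σ : n → ℝ}
    (hσ : 0 ≤ σ) (h : Cᵀ * C = diagonal (σ ^ 2)) : C.trace ≤ ∑ i, σ i :=
  Finset.sum_le_sum fun i _ => le_of_sum_sq_eq_sq (hσ i) (sum_sq_col_eq h i) i

lemma eq_diagonal_of_trace_eq_sum {C : Matrix n n ℝ} {σ : n → ℝ} (hσ : 0 ≤ σ)
    (h : Cᵀ * C = diagonal (σ ^ 2)) (htr : C.trace = ∑ i, σ i) : C = diagonal σ := by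
  have hdiag : ∀ i, C i i = σ i :=
    fun i => (Finset.sum_eq_sum_iff_of_le fun i _ =>
      le_of_sum_sq_eq_sq (hσ i) (sum_sq_col_eq h i) i).mp htr i (Finset.mem_univ i)
  ext k i
  rcases eq_or_ne k i with rfl | hk
  · simp [hdiag]
  · rw [diagonal_apply_ne _ hk]
    exact eq_zero_of_sum_sq_eq_sq (x := fun k => C k i) (by simp [sum_sq_col_eq h, hdiag]) hk

lemma exists_orthogonal_mul_diagonal {C : Matrix n n ℝ} {σ : n → ℝ}
    (h : Cᵀ * C = diagonal (σ ^ 2)) : ∃ U : Matrix n n ℝ, Uᵀ * U = 1 ∧ C = U * diagonal σ := by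
  let v : n → EuclideanSpace ℝ n := fun i => WithLp.toLp 2 ((σ i)⁻¹ • fun k => C k i)
  have hv : Orthonormal ℝ ({i | σ i ≠ 0}.domRestrict v) := by
    rw [orthonormal_iff_ite]
    rintro ⟨i, hi⟩ ⟨j, hj⟩
    have hCij := congrFun (congrFun h i) j
    simp only [mul_apply, transpose_apply, diagonal_apply] at hCij
    simp only [Set.domRestrict_apply, v, PiLp.inner_apply, Pi.smul_apply,
      smul_eq_mul, RCLike.inner_apply, conj_trivial, Subtype.mk.injEq]
    calc ∑ k, (σ j)⁻¹ * C k j * ((σ i)⁻¹ * C k i)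
        = (σ i)⁻¹ * (σ j)⁻¹ * ∑ k, C k i * C k j := by
          rw [Finset.mul_sum]; exact Finset.sum_congr rfl fun k _ => by ring
      _ = if i = j then 1 else 0 := by
        rw [hCij]; split_ifs with hij
        · subst hij
          rw [Pi.pow_apply, ← mul_inv, ← sq]
          exact inv_mul_cancel₀ (pow_ne_zero 2 hi)
        · simp
  obtain ⟨b, hb⟩ := hv.exists_orthonormalBasis_extension_of_card_eq (by simp)
  refine ⟨(EuclideanSpace.basisFun n ℝ).toBasis.toMatrix b.toBasis, ?_, ?_⟩
  · simpa using (EuclideanSpace.basisFun n ℝ).toMatrix_orthonormalBasis_conjTranspose_mul_self b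
  · ext k i
    simp only [mul_diagonal, Module.Basis.toMatrix_apply, OrthonormalBasis.coe_toBasis_repr_apply,
      EuclideanSpace.basisFun_repr, OrthonormalBasis.coe_toBasis]
    by_cases hi : σ i = 0
    · have hcol : ∑ k, C k i ^ 2 = 0 := by simpa [hi] using sum_sq_col_eq h i
      rw [hi, mul_zero]
      exact pow_eq_zero_iff two_ne_zero |>.mp
        ((Finset.sum_eq_zero_iff_of_nonneg fun k _ => sq_nonneg (C k i)).mp hcol k
          (Finset.mem_univ k))
    · rw [hb i hi]
      simp [v, field]

lemma posSemidef_transpose_mul_mul_iff {U B : Matrix n n ℝ} (hU : Uᵀ * U = 1) :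
    (Uᵀ * B * U).PosSemidef ↔ B.PosSemidef := by
  have hconj : ∀ {X : Matrix n n ℝ} (W : Matrix n n ℝ), X.PosSemidef → (Wᵀ * X * W).PosSemidef :=
    fun W hX => by
      simpa [conjTranspose_eq_transpose_of_trivial] using hX.conjTranspose_mul_mul_same W
  refine ⟨fun h => ?_, hconj U⟩
  have hU' : U * Uᵀ = 1 := mul_eq_one_comm.mp hU
  simpa [← mul_assoc, hU', mul_assoc _ U, one_mul, mul_one] using hconj Uᵀ h

lemma PosSemidef.eq_of_mul_self_eq {A B : Matrix n n ℝ} (hA : A.PosSemidef) (hB : B.PosSemidef)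
    (h : A * A = B * B) : A = B := by
  open scoped MatrixOrder in
  exact (CFC.sqrt_unique rfl hA.nonneg).symm.trans (CFC.sqrt_unique h.symm hB.nonneg)

lemma trace_transpose_mul_mul {U : Matrix n n ℝ} (hU : U * Uᵀ = 1) (B : Matrix n n ℝ) :
    (Uᵀ * B * U).trace = B.trace := by
  rw [trace_mul_comm, ← Matrix.mul_assoc, hU, Matrix.one_mul]

noncomputable def rightSingularVectors (A : Matrix n n ℝ) : Matrix n n ℝ :=
  (posSemidef_conjTranspose_mul_self A).1.eigenvectorUnitary

noncomputable def singularValues (A : Matrix n n ℝ) (i : n) : ℝ :=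
  √((posSemidef_conjTranspose_mul_self A).1.eigenvalues i)

lemma rightSingularVectors_transpose_mul_self (A : Matrix n n ℝ) :
    (rightSingularVectors A)ᵀ * rightSingularVectors A = 1 := by
  rw [rightSingularVectors, ← conjTranspose_eq_transpose_of_trivial, ← star_eq_conjTranspose]
  exact Unitary.coe_star_mul_self _

lemma singularValues_nonneg (A : Matrix n n ℝ) : 0 ≤ singularValues A :=
  fun _ => Real.sqrt_nonneg _

lemma rightSingularVectors_mul_transpose_self (A : Matrix n n ℝ) :
    rightSingularVectors A * (rightSingularVectors A)ᵀ = 1 :=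
  mul_eq_one_comm.mp (rightSingularVectors_transpose_mul_self A)

lemma transpose_mul_mul_rightSingularVectors (A : Matrix n n ℝ) :
    (rightSingularVectors A)ᵀ * (Aᵀ * A) * rightSingularVectors A =
      diagonal (singularValues A ^ 2) := by
  have hA := posSemidef_conjTranspose_mul_self A
  have hσ : singularValues A ^ 2 = hA.1.eigenvalues :=
    funext fun i => Real.sq_sqrt (hA.eigenvalues_nonneg i)
  have h := hA.1.conjStarAlgAut_star_eigenvectorUnitary
  rw [Unitary.conjStarAlgAut_star_apply] at h
  simpa [rightSingularVectors, hσ, star_eq_conjTranspose, conjTranspose_eq_transpose_of_trivial]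
    using h

lemma conj_rightSingularVectors_transpose_mul_self {A B : Matrix n n ℝ} (hB : Bᵀ * B = Aᵀ * A) :
    ((rightSingularVectors A)ᵀ * B * rightSingularVectors A)ᵀ *
        ((rightSingularVectors A)ᵀ * B * rightSingularVectors A) =
      diagonal (singularValues A ^ 2) := by
  rw [← transpose_mul_mul_rightSingularVectors, ← hB]
  simp only [transpose_mul, transpose_transpose, Matrix.mul_assoc]
  rw [← Matrix.mul_assoc (rightSingularVectors A), rightSingularVectors_mul_transpose_self,
    Matrix.one_mul]

end Matrix

end

section SingularValueSum

variable {m : ℕ}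

lemma svSum_eq_sum_singularValues (A : Matrix (Fin m) (Fin m) ℝ) :
    svSum A = ∑ i, singularValues A i := by
  rw [svSum, trace_mul_cycle, Unitary.coe_star_mul_self, Matrix.one_mul, trace_diagonal]
  rfl

variable {A B Q : Matrix (Fin m) (Fin m) ℝ}

lemma trace_le_svSum (hB : Bᵀ * B = Aᵀ * A) : B.trace ≤ svSum A := by
  rw [svSum_eq_sum_singularValues, ← trace_transpose_mul_mul
    (rightSingularVectors_mul_transpose_self A)]
  exact trace_le_sum_of_transpose_mul_self_eq_diagonal (singularValues_nonneg A)
    (conj_rightSingularVectors_transpose_mul_self hB)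

lemma trace_eq_svSum_iff (hB : Bᵀ * B = Aᵀ * A) : B.trace = svSum A ↔ B.PosSemidef := by
  rw [svSum_eq_sum_singularValues, ← trace_transpose_mul_mul
    (rightSingularVectors_mul_transpose_self A),
    ← posSemidef_transpose_mul_mul_iff (rightSingularVectors_transpose_mul_self A)]
  have hdiag := conj_rightSingularVectors_transpose_mul_self hB
  set C := (rightSingularVectors A)ᵀ * B * rightSingularVectors A
  have hσ : (diagonal (singularValues A)).PosSemidef :=
    posSemidef_diagonal_iff.mpr (singularValues_nonneg A)
  constructor
  · intro h
    rw [eq_diagonal_of_trace_eq_sum (singularValues_nonneg A) hdiag h]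
    exact hσ
  · intro hC
    have hCsq : C * C = diagonal (singularValues A) * diagonal (singularValues A) := by
      calc C * C = Cᴴ * C := by rw [hC.1.eq]
        _ = diagonal (singularValues A) * diagonal (singularValues A) := by
          rw [conjTranspose_eq_transpose_of_trivial, hdiag, diagonal_mul_diagonal, ← Pi.mul_def,
            ← sq]
    rw [hC.eq_of_mul_self_eq hσ hCsq, trace_diagonal]

lemma transpose_mul_self_of_orthogonal (hQ : Qᵀ * Q = 1) (A : Matrix (Fin m) (Fin m) ℝ) :
    (Qᵀ * A)ᵀ * (Qᵀ * A) = Aᵀ * A := by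
  rw [transpose_mul, transpose_transpose, Matrix.mul_assoc, ← Matrix.mul_assoc Q,
    mul_eq_one_comm.mp hQ, Matrix.one_mul]

lemma trace_mul_transpose_le_svSum (hQ : Qᵀ * Q = 1) : (A * Qᵀ).trace ≤ svSum A :=
  trace_mul_comm A Qᵀ ▸ trace_le_svSum (transpose_mul_self_of_orthogonal hQ A)

lemma trace_mul_transpose_eq_svSum_iff (hQ : Qᵀ * Q = 1) :
    (A * Qᵀ).trace = svSum A ↔ (A * Qᵀ).PosSemidef ∧ (Qᵀ * A).PosSemidef := by
  have hQ' : Qᵀᵀ * Qᵀ = 1 := by rw [transpose_transpose]; exact mul_eq_one_comm.mp hQ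
  have hconj : Qᵀᵀ * (Qᵀ * A) * Qᵀ = A * Qᵀ := by
    rw [transpose_transpose, ← Matrix.mul_assoc, mul_eq_one_comm.mp hQ, Matrix.one_mul]
  rw [trace_mul_comm, trace_eq_svSum_iff (transpose_mul_self_of_orthogonal hQ A),
    ← hconj, posSemidef_transpose_mul_mul_iff hQ', and_self]

lemma exists_orthogonal_trace_mul_transpose_eq_svSum (A : Matrix (Fin m) (Fin m) ℝ) :
    ∃ Q : Matrix (Fin m) (Fin m) ℝ, Qᵀ * Q = 1 ∧ (A * Qᵀ).trace = svSum A := by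
  set V := rightSingularVectors A
  obtain ⟨U, hU, hAV⟩ := exists_orthogonal_mul_diagonal (C := A * V) (by
    simpa [Matrix.mul_assoc] using transpose_mul_mul_rightSingularVectors A)
  have hVV := rightSingularVectors_mul_transpose_self A
  have hA : (U * Vᵀ)ᵀ * A = Vᵀᵀ * diagonal (singularValues A) * Vᵀ := by
    calc (U * Vᵀ)ᵀ * A = V * Uᵀ * (A * V * Vᵀ) := by
          rw [Matrix.mul_assoc A, hVV, Matrix.mul_one, transpose_mul, transpose_transpose]
      _ = Vᵀᵀ * diagonal (singularValues A) * Vᵀ := by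
          rw [hAV, transpose_transpose, Matrix.mul_assoc V, ← Matrix.mul_assoc Uᵀ,
            ← Matrix.mul_assoc Uᵀ, hU, Matrix.one_mul, Matrix.mul_assoc]
  have hQ : (U * Vᵀ)ᵀ * (U * Vᵀ) = 1 := by
    rw [transpose_mul, transpose_transpose, Matrix.mul_assoc, ← Matrix.mul_assoc Uᵀ, hU,
      Matrix.one_mul, hVV]
  refine ⟨U * Vᵀ, hQ, ?_⟩
  rw [trace_mul_comm, trace_eq_svSum_iff (transpose_mul_self_of_orthogonal hQ A), hA,
    posSemidef_transpose_mul_mul_iff (by rw [transpose_transpose]; exact hVV)]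
  exact posSemidef_diagonal_iff.mpr (singularValues_nonneg A)

end SingularValueSum

section Blocks
variable {d T : ℕ}

noncomputable def blockDiagMat (Q : Fin T → Matrix (Fin d) (Fin d) ℝ) : Mat d T :=
  reindex (Equiv.prodComm _ _) (Equiv.prodComm _ _) (blockDiagonal Q)

lemma blk_blockDiagMat (Q : Fin T → Matrix (Fin d) (Fin d) ℝ) (t : Fin T) :
    blk (blockDiagMat Q) t = Q t := by
  ext i j
  simp [blk, blockDiagMat, blockDiagonal_apply]

lemma memO_blockDiagMat {Q : Fin T → Matrix (Fin d) (Fin d) ℝ} (hQ : ∀ t, (Q t)ᵀ * Q t = 1) :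
    memO (blockDiagMat Q) := by
  refine ⟨fun t s i j hts => by simp [blockDiagMat, blockDiagonal_apply, hts], ?_⟩
  rw [blockDiagMat, transpose_reindex, reindex_apply, reindex_apply, submatrix_mul_equiv,
    blockDiagonal_transpose, ← blockDiagonal_mul, funext hQ,
    show (fun _ => 1 : Fin T → Matrix (Fin d) (Fin d) ℝ) = 1 from rfl, blockDiagonal_one]
  exact submatrix_one_equiv _

lemma trace_eq_sum_trace_blk (A : Mat d T) : A.trace = ∑ t, (blk A t).trace := by
  simp [trace, Fintype.sum_prod_type, blk]

lemma blk_transpose_mul {O : Mat d T}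
    (hO : ∀ (t s : Fin T) (i j : Fin d), t ≠ s → O (t, i) (s, j) = 0) (C : Mat d T) (t : Fin T) :
    blk (Oᵀ * C) t = (blk O t)ᵀ * blk C t := by
  ext i j
  simp only [blk, mul_apply, transpose_apply, Fintype.sum_prod_type]
  rw [Finset.sum_eq_single t (fun s _ hs => by simp [hO s t _ i hs]) (by simp)]

lemma memO.blk_transpose_mul_self {O : Mat d T} (hO : memO O) (t : Fin T) :
    (blk O t)ᵀ * blk O t = 1 := by
  rw [← blk_transpose_mul hO.1, hO.2]
  ext i j
  simp [blk, one_apply]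

lemma memO_one : memO (1 : Mat d T) :=
  ⟨fun _ _ _ _ hts => one_apply_ne (by simp [hts]), by rw [transpose_one, Matrix.one_mul]⟩

lemma blk_one (t : Fin T) : blk (1 : Mat d T) t = 1 := by
  ext i j
  simp [blk, one_apply]

lemma trace_transpose_mul_eq_sum_blk {O : Mat d T}
    (hO : ∀ (t s : Fin T) (i j : Fin d), t ≠ s → O (t, i) (s, j) = 0) (C : Mat d T) :
    (Oᵀ * C).trace = ∑ t, (blk C t * (blk O t)ᵀ).trace := by
  simp only [trace_eq_sum_trace_blk, blk_transpose_mul hO, trace_mul_comm (blk O _)ᵀ]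

end Blocks

lemma frobNorm_nonneg {m k : Type*} [Fintype m] [Fintype k] (X : Matrix m k ℝ) :
    0 ≤ frobNorm X :=
  Real.sqrt_nonneg _

lemma frobNorm_sq {m k : Type*} [Fintype m] [Fintype k] (X : Matrix m k ℝ) :
    frobNorm X ^ 2 = (Xᵀ * X).trace := by
  rw [frobNorm, Real.sq_sqrt (by positivity), Finset.sum_comm]
  simp [trace, mul_apply, sq]

lemma frobNorm_sub_mul_sq {n : Type*} [Fintype n] [DecidableEq n] {L M O : Matrix n n ℝ}
    (hO : Oᵀ * O = 1) :
    frobNorm (L - M * O) ^ 2 = (Lᵀ * L).trace + (Mᵀ * M).trace - 2 * (Oᵀ * (Mᵀ * L)).trace := by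
  have hO' : O * Oᵀ = 1 := mul_eq_one_comm.mp hO
  have hcross : (Lᵀ * (M * O)).trace = (Oᵀ * (Mᵀ * L)).trace := by
    rw [← trace_transpose, transpose_mul, transpose_mul, transpose_transpose, Matrix.mul_assoc]
  have hquad : ((M * O)ᵀ * (M * O)).trace = (Mᵀ * M).trace := by
    rw [transpose_mul, Matrix.mul_assoc, trace_mul_comm, ← Matrix.mul_assoc, Matrix.mul_assoc _ O,
      hO', Matrix.mul_one]
  rw [frobNorm_sq, transpose_sub, sub_mul, mul_sub, mul_sub, trace_sub, trace_sub, trace_sub,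
    hcross, hquad, transpose_mul, Matrix.mul_assoc]
  ring

section Optimizers
variable {d T : ℕ}

lemma frobNorm_sub_mul_sq_of_memO {L M O : Mat d T} (hO : memO O) :
    frobNorm (L - M * O) ^ 2 = (Lᵀ * L).trace + (Mᵀ * M).trace -
      2 * ∑ t, (blk (Mᵀ * L) t * (blk O t)ᵀ).trace := by
  rw [frobNorm_sub_mul_sq hO.2, trace_transpose_mul_eq_sum_blk hO.1]

lemma exists_memO_forall_trace_eq_svSum (C : Mat d T) :
    ∃ O : Mat d T, memO O ∧ ∀ t, (blk C t * (blk O t)ᵀ).trace = svSum (blk C t) := by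
  choose Q hQ htr using fun t => exists_orthogonal_trace_mul_transpose_eq_svSum (blk C t)
  exact ⟨blockDiagMat Q, memO_blockDiagMat hQ, fun t => by rw [blk_blockDiagMat, htr]⟩

lemma mem_OStar_iff_forall_trace_eq_svSum {L M P : Mat d T} (hP : memO P) :
    P ∈ OStar L M ↔ ∀ t, (blk (Mᵀ * L) t * (blk P t)ᵀ).trace = svSum (blk (Mᵀ * L) t) := by
  have hle : ∀ {O : Mat d T}, memO O → ∀ t ∈ Finset.univ,
      (blk (Mᵀ * L) t * (blk O t)ᵀ).trace ≤ svSum (blk (Mᵀ * L) t) :=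
    fun hO t _ => trace_mul_transpose_le_svSum (hO.blk_transpose_mul_self t)
  obtain ⟨O₀, hO₀, hopt⟩ := exists_memO_forall_trace_eq_svSum (Mᵀ * L)
  have hmin : ∀ {O : Mat d T}, memO O → frobNorm (L - M * O₀) ≤ frobNorm (L - M * O) := by
    intro O hO
    refine (pow_le_pow_iff_left₀ (frobNorm_nonneg _) (frobNorm_nonneg _) two_ne_zero).mp ?_
    rw [frobNorm_sub_mul_sq_of_memO hO₀, frobNorm_sub_mul_sq_of_memO hO, Finset.sum_congr rfl
      fun t _ => hopt t]
    linarith [Finset.sum_le_sum (hle hO)]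
  have hdist : dABW L M = frobNorm (L - M * O₀) :=
    IsLeast.csInf_eq ⟨⟨O₀, hO₀, rfl⟩, by rintro r ⟨O, hO, rfl⟩; exact hmin hO⟩
  rw [OStar, Set.mem_ofPred_eq, hdist, and_iff_right hP,
    ← sq_eq_sq₀ (frobNorm_nonneg _) (frobNorm_nonneg _), frobNorm_sub_mul_sq_of_memO hP,
    frobNorm_sub_mul_sq_of_memO hO₀, Finset.sum_congr rfl fun t _ => hopt t, sub_right_inj,
    mul_right_inj' two_ne_zero, Finset.sum_eq_sum_iff_of_le (hle hP)]
  simp only [Finset.mem_univ, true_implies]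

end Optimizers

theorem stmt2_general (d T : ℕ) (L M P : Mat d T) (hP : memO P) :
    (P ∈ OStar L M ↔
      ∀ t : Fin T, (blk (Mᵀ * L) t * (blk P t)ᵀ).PosSemidef ∧
        ((blk P t)ᵀ * blk (Mᵀ * L) t).PosSemidef) ∧
    (P ∈ OStar L M ↔
      ∀ t : Fin T, (blk (Mᵀ * L) t * (blk P t)ᵀ).trace = svSum (blk (Mᵀ * L) t)) ∧
    ((1 : Mat d T) ∈ OStar L M ↔ ∀ t : Fin T, (blk (Mᵀ * L) t).PosSemidef) := by
  have hchar := mem_OStar_iff_forall_trace_eq_svSum (L := L) (M := M) hP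
  refine ⟨hchar.trans (forall_congr' fun t =>
    trace_mul_transpose_eq_svSum_iff (hP.blk_transpose_mul_self t)), hchar, ?_⟩
  rw [mem_OStar_iff_forall_trace_eq_svSum memO_one]
  refine forall_congr' fun t => ?_
  simpa [blk_one] using
    trace_mul_transpose_eq_svSum_iff (A := blk (Mᵀ * L) t) (Q := 1) (by simp)

/-- characterization of the optimizers `𝐎*(L,M)`. -/
theorem stmt2 (d T : ℕ) (hd : 0 < d) (hT : 0 < T) (L M P : Mat d T)
    (hL : memL L) (hM : memL M) (hP : memO P) :
    (P ∈ OStar L M ↔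
      ∀ t : Fin T, (blk (Mᵀ * L) t * (blk P t)ᵀ).PosSemidef ∧
        ((blk P t)ᵀ * blk (Mᵀ * L) t).PosSemidef) ∧
    (P ∈ OStar L M ↔
      ∀ t : Fin T, (blk (Mᵀ * L) t * (blk P t)ᵀ).trace = svSum (blk (Mᵀ * L) t)) ∧
    ((1 : Mat d T) ∈ OStar L M ↔ ∀ t : Fin T, (blk (Mᵀ * L) t).PosSemidef) :=
  stmt2_general d T L M P hP
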